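/- arXiv:2511.01845 — 4 statements merged into one kernel-verified Lean document; each statement's English description precedes it below -/
import Mathlib

section
/- Let d ≥ 1, let g ≥ 1, and let P_1, …, P_g be pairwise commuting d × d complex matrices with P_j² = I for each j. Let X be a d × d complex matrix such that for every j, either P_j·X = X·P_j or P_j·X = −X·P_j; let S := { j : P_j X = −X P_j } be the set of anticommuting indices. Let θ_1, …, θ_g be real numbers and set U := Π_{j=1}^{g} exp(−(θ_j/2)·i·P_j). Then (Π_{j=1}^{g} exp((θ_j/2)·i·P_j)) · X · U = ( Π_{j ∈ S} ( cos(θ_j) · I + (i·sin(θ_j)) · P_j ) ) · X. -/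
open NormedSpace

attribute [local instance] Classical.propDecidable

/-!
For an involution `P`, the exponential of `c • P` is computed by transporting `exp` along the
continuous ring homomorphism `ℂ × ℂ → Matrix m m ℂ` sending the idempotents `(1, 0)`, `(0, 1)` to
the spectral projections `(1 ± P) / 2`: `exp (c • P) = cosh c + sinh c • P`.

Pushing `X` to the left through the right-hand product turns each factor `exp (-(θⱼ/2) i Pⱼ)` into
`exp ((θⱼ/2) i Pⱼ)` if `Pⱼ` anticommutes with `X` and leaves it alone otherwise. All factors are
exponentials of multiples of the commuting `Pⱼ`, so the two products merge gate by gate, into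
`exp (θⱼ i Pⱼ) = cos θⱼ + i sin θⱼ • Pⱼ` or into `1`.
-/

namespace List

variable {M : Type*} [Monoid M]

theorem semiconjBy_prod_ofFn {n : ℕ} {a : M} {f g : Fin n → M}
    (h : ∀ i, SemiconjBy a (f i) (g i)) : SemiconjBy a (ofFn f).prod (ofFn g).prod := by
  induction n with
  | zero => simp
  | succ n ih =>
    simpa only [ofFn_succ, prod_cons] using (h 0).mul_right (ih fun i => h i.succ)

theorem prod_ofFn_mul_prod_ofFn_of_commute {n : ℕ} {f g : Fin n → M}
    (h : ∀ i j, Commute (f i) (g j)) :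
    (ofFn f).prod * (ofFn g).prod = (ofFn fun i => f i * g i).prod := by
  induction n with
  | zero => simp
  | succ n ih =>
    have hcomm : Commute (g 0) (ofFn fun i => f i.succ).prod :=
      semiconjBy_prod_ofFn fun i => (h i.succ 0).symm
    simp only [ofFn_succ, prod_cons]
    rw [← ih fun i j => h i.succ j.succ, mul_assoc, ← mul_assoc _ (g 0), ← hcomm.eq]
    simp only [mul_assoc]

theorem prod_ofFn_mul_mul_prod_ofFn {n : ℕ} {a b c : Fin n → M} {x : M}
    (hac : ∀ i j, Commute (a i) (c j)) (hbc : ∀ i, SemiconjBy x (b i) (c i)) :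
    (ofFn a).prod * x * (ofFn b).prod = (ofFn fun i => a i * c i).prod * x := by
  rw [mul_assoc, (semiconjBy_prod_ofFn hbc).eq, ← mul_assoc,
    prod_ofFn_mul_prod_ofFn_of_commute hac]

end List

namespace Matrix

variable {m : Type*} [Fintype m] [DecidableEq m]

theorem semiconjBy_exp {X A B : Matrix m m ℂ} (h : SemiconjBy X A B) :
    SemiconjBy X (exp A) (exp B) := by
  open scoped Matrix.Norms.Operator in exact h.exp_right

variable {P : Matrix m m ℂ}

noncomputable def involutionRingHom (P : Matrix m m ℂ) (hP : P * P = 1) :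
    ℂ × ℂ →+* Matrix m m ℂ where
  toFun p := ((p.1 + p.2) / 2) • (1 : Matrix m m ℂ) + ((p.1 - p.2) / 2) • P
  map_one' := by norm_num
  map_mul' x y := by
    simp only [Prod.fst_mul, Prod.snd_mul, mul_add, add_mul, smul_mul_assoc, mul_smul_comm,
      hP, mul_one, one_mul]
    match_scalars <;> ring
  map_zero' := by norm_num
  map_add' x y := by
    simp only [Prod.fst_add, Prod.snd_add]
    match_scalars <;> ring

theorem involutionRingHom_apply (hP : P * P = 1) (p : ℂ × ℂ) :
    involutionRingHom P hP p = ((p.1 + p.2) / 2) • (1 : Matrix m m ℂ) + ((p.1 - p.2) / 2) • P :=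
  rfl

theorem continuous_involutionRingHom (hP : P * P = 1) : Continuous (involutionRingHom P hP) := by
  simp only [involutionRingHom, RingHom.coe_mk, MonoidHom.coe_mk, OneHom.coe_mk]
  fun_prop

theorem exp_smul_of_mul_self_eq_one (hP : P * P = 1) (c : ℂ) :
    exp (c • P) = Complex.cosh c • (1 : Matrix m m ℂ) + Complex.sinh c • P := by
  have hcP : involutionRingHom P hP (c, -c) = c • P := by
    rw [involutionRingHom_apply]
    match_scalars <;> ring
  have hexp : exp ((c, -c) : ℂ × ℂ) = (Complex.exp c, Complex.exp (-c)) := by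
    ext <;> simp [← Complex.exp_eq_exp_ℂ]
  calc exp (c • P) = exp (involutionRingHom P hP (c, -c)) := by rw [hcP]
    _ = involutionRingHom P hP (exp (c, -c)) := by
      open scoped Matrix.Norms.Operator in
      exact (map_exp _ (continuous_involutionRingHom hP) _).symm
    _ = Complex.cosh c • (1 : Matrix m m ℂ) + Complex.sinh c • P := by
      rw [hexp, involutionRingHom_apply, Complex.cosh, Complex.sinh]

theorem exp_ofReal_mul_I_smul_of_mul_self_eq_one (hP : P * P = 1) (t : ℝ) :
    exp (((t : ℂ) * Complex.I) • P) =
      (Real.cos t : ℂ) • (1 : Matrix m m ℂ) + (Complex.I * (Real.sin t : ℂ)) • P := by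
  rw [exp_smul_of_mul_self_eq_one hP, Complex.cosh_mul_I, Complex.sinh_mul_I,
    ← Complex.ofReal_cos, ← Complex.ofReal_sin, mul_comm]

theorem exp_half_smul_mul_exp_half_smul_of_mul_self_eq_one (hP : P * P = 1) (t : ℝ) :
    exp (((t / 2 : ℂ) * Complex.I) • P) * exp (((t / 2 : ℂ) * Complex.I) • P) =
      (Real.cos t : ℂ) • (1 : Matrix m m ℂ) + (Complex.I * (Real.sin t : ℂ)) • P := by
  rw [← exp_add_of_commute _ _ ((Commute.refl P).smul_left _ |>.smul_right _), ← add_smul,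
    ← exp_ofReal_mul_I_smul_of_mul_self_eq_one hP]
  ring_nf

theorem exp_smul_mul_exp_neg_smul (A : Matrix m m ℂ) (c : ℂ) :
    exp (c • A) * exp ((-c) • A) = 1 := by
  rw [← exp_add_of_commute _ _ ((Commute.refl A).smul_left _ |>.smul_right _), ← add_smul,
    add_neg_cancel, zero_smul, exp_zero]

theorem semiconjBy_exp_neg_smul_of_mul_eq_neg_mul {X : Matrix m m ℂ} (h : P * X = -(X * P))
    (c : ℂ) : SemiconjBy X (exp ((-c) • P)) (exp (c • P)) := by
  refine semiconjBy_exp ?_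
  rw [SemiconjBy, mul_smul_comm, smul_mul_assoc, h, neg_smul, smul_neg]

end Matrix

theorem commuting_circuit_propagation_general
    (d g : ℕ)
    (P : Fin g → Matrix (Fin d) (Fin d) ℂ)
    (hcomm : ∀ j l, P j * P l = P l * P j)
    (hinv : ∀ j, P j * P j = 1)
    (X : Matrix (Fin d) (Fin d) ℂ)
    (hcx : ∀ j, P j * X = X * P j ∨ P j * X = -(X * P j))
    (θ : Fin g → ℝ) :
    (List.ofFn fun j => exp (((θ j / 2 : ℂ) * Complex.I) • P j)).prod * X *
        (List.ofFn fun j => exp ((-(θ j / 2 : ℂ) * Complex.I) • P j)).prod =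
      (List.ofFn fun j =>
          if P j * X = -(X * P j) then
            (Real.cos (θ j) : ℂ) • (1 : Matrix (Fin d) (Fin d) ℂ) +
              (Complex.I * (Real.sin (θ j) : ℂ)) • P j
          else 1).prod * X := by
  simp only [neg_mul]
  rw [List.prod_ofFn_mul_mul_prod_ofFn (c := fun j => exp
    ((if P j * X = -(X * P j) then (θ j / 2 : ℂ) * Complex.I else -((θ j / 2 : ℂ) * Complex.I)) •
      P j))]
  · congr 3
    funext j
    split_ifs
    · exact Matrix.exp_half_smul_mul_exp_half_smul_of_mul_self_eq_one (hinv j) (θ j)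
    · exact Matrix.exp_smul_mul_exp_neg_smul (P j) _
  · exact fun i j => ((Commute.smul_left (hcomm i j) _).smul_right _).exp
  · intro j
    split_ifs with h
    · exact Matrix.semiconjBy_exp_neg_smul_of_mul_eq_neg_mul h _
    · exact (Commute.symm ((hcx j).resolve_right h) |>.smul_right _).exp_right

/-- **Heisenberg propagation through a commuting (IQP-type) circuit.**
For pairwise commuting involutive generators `P j` and an observable `X` that
commutes or anticommutes with each `P j`, conjugating `X` by
`U = Π_j exp(−(θ_j/2) i P_j)` multiplies `X` by `cos θ_j · I + i sin θ_j · P_j`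
for exactly those `j` whose generator anticommutes with `X`. -/
theorem commuting_circuit_propagation
    (d g : ℕ) (hd : 1 ≤ d) (hg : 1 ≤ g)
    (P : Fin g → Matrix (Fin d) (Fin d) ℂ)
    (hcomm : ∀ j l, P j * P l = P l * P j)
    (hinv : ∀ j, P j * P j = 1)
    (X : Matrix (Fin d) (Fin d) ℂ)
    (hcx : ∀ j, P j * X = X * P j ∨ P j * X = -(X * P j))
    (θ : Fin g → ℝ) :
    (List.ofFn fun j => exp (((θ j / 2 : ℂ) * Complex.I) • P j)).prod * X *
        (List.ofFn fun j => exp ((-(θ j / 2 : ℂ) * Complex.I) • P j)).prod =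
      (List.ofFn fun j =>
          if P j * X = -(X * P j) then
            (Real.cos (θ j) : ℂ) • (1 : Matrix (Fin d) (Fin d) ℂ) +
              (Complex.I * (Real.sin (θ j) : ℂ)) • P j
          else 1).prod * X :=
  commuting_circuit_propagation_general d g P hcomm hinv X hcx θ
end

section
/- Under the hypotheses of the commuting-circuit propagation rule — pairwise commuting d × d matrices P_j with P_j² = I (j = 1,…,g), a matrix X that commutes or anticommutes with each P_j, anticommuting index set S of cardinality M, angles θ_j, and U := Π_j exp(−(θ_j/2)·i·P_j) — the propagated observable admits the Pauli-path expansion: (Π_j exp((θ_j/2)·i·P_j)) · X · U = Σ_{r ∈ {0,1}^S} α(r) · ( Π_{j ∈ S} P_j^{r_j} ) · X, where α(r) := Π_{j ∈ S} (i·sin θ_j)^{r_j} · (cos θ_j)^{1 − r_j}. -/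
/-! Since `P j * P j = 1`, `exp (i z P j) = cos z + i sin z • P j`. Moving `X` through the
right-hand product flips the sign of the angle exactly for the generators anticommuting with `X`;
as all generators commute, the factors with `j ∉ S` then cancel and those with `j ∈ S` combine to
`cos θ_j + i sin θ_j • P_j`. Expanding this product over `S` gives the Pauli paths. -/

open NormedSpace

attribute [local instance] Classical.propDecidable

section Cis

variable {𝔸 : Type*} [Ring 𝔸] [Algebra ℂ 𝔸]

noncomputable def cis (z : ℂ) (p : 𝔸) : 𝔸 :=
  Complex.cos z • 1 + (Complex.sin z * Complex.I) • p

theorem cis_mul_cis {p : 𝔸} (hp : p * p = 1) (a b : ℂ) :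
    cis a p * cis b p = cis (a + b) p := by
  simp only [cis, mul_add, add_mul, smul_mul_smul_comm, one_mul, mul_one, hp, Complex.cos_add,
    Complex.sin_add]
  linear_combination (norm := module)
    (Complex.sin a * Complex.sin b) • Complex.I_mul_I • (1 : 𝔸)

theorem Commute.cis_right {x p : 𝔸} (h : Commute x p) (z : ℂ) : Commute x (cis z p) :=
  ((Commute.one_right x).smul_right _).add_right (h.smul_right _)

theorem Commute.cis_left {p x : 𝔸} (h : Commute p x) (z : ℂ) : Commute (cis z p) x :=
  (h.symm.cis_right z).symm

theorem Commute.cis {p q : 𝔸} (h : Commute p q) (a b : ℂ) :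
    Commute (_root_.cis a p) (_root_.cis b q) :=
  (h.cis_left a).cis_right b

theorem semiconjBy_cis_neg {x p : 𝔸} (h : p * x = -(x * p)) (z : ℂ) :
    SemiconjBy x (cis (-z) p) (cis z p) := by
  simp only [SemiconjBy, cis, mul_add, add_mul, mul_smul_comm, smul_mul_assoc, mul_one, one_mul, h,
    Complex.cos_neg, Complex.sin_neg]
  module

theorem exp_smul_I_eq_cis [TopologicalSpace 𝔸] [IsTopologicalRing 𝔸] [ContinuousSMul ℂ 𝔸]
    [T2Space 𝔸] {p : 𝔸} (hp : p * p = 1) (z : ℂ) :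
    exp ((z * Complex.I) • p) = cis z p := by
  have hp2 : p ^ 2 = 1 := by rw [sq, hp]
  rw [exp_eq_tsum ℂ]
  refine HasSum.tsum_eq (HasSum.even_add_odd ?_ ?_)
  · convert (Complex.hasSum_cos' z).smul_const (1 : 𝔸) using 2 with k
    rw [smul_pow, pow_mul p, hp2, one_pow, smul_smul, pow_mul, mul_pow, Complex.I_sq]
    ring_nf
  · convert ((Complex.hasSum_sin' z).mul_right Complex.I).smul_const p using 2 with k
    rw [smul_pow, pow_succ p, pow_mul p, hp2, one_pow, one_mul, smul_smul]
    congr 1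
    rw [div_mul_cancel₀ _ Complex.I_ne_zero, pow_succ, pow_mul]
    ring

end Cis

theorem SemiconjBy.list_prod_ofFn {M : Type*} [Monoid M] {n : ℕ} {a : M} {x y : Fin n → M}
    (h : ∀ i, SemiconjBy a (x i) (y i)) :
    SemiconjBy a (List.ofFn x).prod (List.ofFn y).prod := by
  induction n with
  | zero => simp
  | succ n ih =>
    simp only [List.ofFn_succ, List.prod_cons]
    exact (h 0).mul_right (ih fun i => h i.succ)

theorem List.prod_ofFn_mul_prod_ofFn {M : Type*} [Monoid M] {n : ℕ} {f g : Fin n → M}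
    (h : ∀ i j, Commute (g i) (f j)) :
    (List.ofFn f).prod * (List.ofFn g).prod = (List.ofFn fun i => f i * g i).prod := by
  induction n with
  | zero => simp
  | succ n ih =>
    have hcomm : Commute (g 0) (List.ofFn fun i => f i.succ).prod :=
      Commute.list_prod_right _ _ fun y hy => by
        obtain ⟨i, rfl⟩ := List.mem_ofFn.1 hy
        exact h 0 i.succ
    simp only [List.ofFn_succ, List.prod_cons]
    rw [← ih fun i j => h i.succ j.succ, mul_assoc, ← mul_assoc _ (g 0), ← hcomm.eq]
    simp only [mul_assoc]

theorem List.prod_ofFn_ite_eq_prod {M : Type*} [CommMonoid M] {n : ℕ} (f : Fin n → M)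
    (S : Finset (Fin n)) :
    (List.ofFn fun j => if j ∈ S then f j else 1).prod = ∏ j ∈ S, f j := by
  rw [List.prod_ofFn, Fintype.prod_extend_by_one]

theorem Finset.prod_smul_one_add_smul {R A ι : Type*} [CommRing R] [CommRing A] [Algebra R A]
    [DecidableEq ι] (a b : ι → R) (q : ι → A) (S : Finset ι) :
    ∏ j ∈ S, (a j • 1 + b j • q j) =
      ∑ T ∈ S.powerset, ((∏ j ∈ T, b j) * ∏ j ∈ S \ T, a j) • ∏ j ∈ T, q j := by
  simp_rw [add_comm (a _ • _), Finset.prod_add, Finset.prod_smul, Finset.prod_const_one,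
    smul_mul_smul_comm, mul_one]

open scoped IsMulCommutative in
theorem List.prod_ofFn_ite_smul_one_add_smul_of_commute {R B : Type*} [CommRing R] [Ring B]
    [Algebra R B] {n : ℕ} (Q : Fin n → B) (hQ : ∀ i j, Commute (Q i) (Q j))
    (a b : Fin n → R) (S : Finset (Fin n)) :
    (List.ofFn fun j => if j ∈ S then a j • 1 + b j • Q j else 1).prod =
      ∑ T ∈ S.powerset, ((∏ j ∈ T, b j) * ∏ j ∈ S \ T, a j) •
        (List.ofFn fun j => if j ∈ T then Q j else 1).prod := by
  -- Inside the commutative subalgebra generated by the `Q j`, this is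
  -- `Finset.prod_smul_one_add_smul`.
  set A := Algebra.adjoin R (Set.range Q)
  have : IsMulCommutative A :=
    Algebra.isMulCommutative_adjoin R (by rintro _ ⟨i, rfl⟩ _ ⟨j, rfl⟩; exact hQ i j)
  obtain ⟨q, hq⟩ : ∃ q : Fin n → A, ∀ j, (q j : B) = Q j :=
    ⟨fun j => ⟨Q j, Algebra.subset_adjoin ⟨j, rfl⟩⟩, fun _ => rfl⟩
  have hval : ∀ (T : Finset (Fin n)) (f : Fin n → A),
      (List.ofFn fun j => if j ∈ T then (f j : B) else 1).prod = ↑(∏ j ∈ T, f j) := by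
    intro T f
    rw [← List.prod_ofFn_ite_eq_prod, ← A.val_apply, map_list_prod, List.map_ofFn]
    simp [Function.comp_def, apply_ite]
  have hfactor : ∀ j, a j • 1 + b j • Q j = ↑(a j • 1 + b j • q j) := by simp [hq]
  simp_rw [hfactor, hval, Finset.prod_smul_one_add_smul, ← hq, hval]
  push_cast
  rfl

theorem commuting_circuit_pauli_path_expansion_general
    (d g : ℕ)
    (P : Fin g → Matrix (Fin d) (Fin d) ℂ)
    (hcomm : ∀ j l, P j * P l = P l * P j)
    (hinv : ∀ j, P j * P j = 1)
    (X : Matrix (Fin d) (Fin d) ℂ)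
    (hcx : ∀ j, P j * X = X * P j ∨ P j * X = -(X * P j))
    (θ : Fin g → ℝ)
    (S : Finset (Fin g))
    (hS : S = Finset.univ.filter (fun j => P j * X = -(X * P j))) :
    (List.ofFn fun j => exp (((θ j / 2 : ℂ) * Complex.I) • P j)).prod * X *
        (List.ofFn fun j => exp ((-(θ j / 2 : ℂ) * Complex.I) • P j)).prod =
      ∑ T ∈ S.powerset,
        ((∏ j ∈ T, (Complex.I * (Real.sin (θ j) : ℂ))) *
            ∏ j ∈ S \ T, (Real.cos (θ j) : ℂ)) •
          ((List.ofFn fun j =>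
              if j ∈ T then P j else (1 : Matrix (Fin d) (Fin d) ℂ)).prod * X) := by
  have hmemS : ∀ j, j ∈ S ↔ P j * X = -(X * P j) := by simp [hS]
  set ψ : Fin g → ℂ := fun j => if j ∈ S then (θ j / 2 : ℂ) else -(θ j / 2 : ℂ)
  have hXψ : ∀ j, SemiconjBy X (cis (-(θ j / 2 : ℂ)) (P j)) (cis (ψ j) (P j)) := by
    intro j
    by_cases hj : j ∈ S
    · simp only [ψ, if_pos hj]
      exact semiconjBy_cis_neg ((hmemS j).1 hj) _
    · simp only [ψ, if_neg hj]
      exact Commute.cis_right ((hcx j).resolve_right (mt (hmemS j).2 hj)).symm _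
  have hψ : ∀ j, cis (θ j / 2 + ψ j : ℂ) (P j) =
      if j ∈ S then (Real.cos (θ j) : ℂ) • 1 + (Complex.I * Real.sin (θ j)) • P j else 1 := by
    intro j
    split_ifs with hj <;> simp [ψ, hj, cis, mul_comm Complex.I]
  simp only [exp_smul_I_eq_cis (hinv _)]
  rw [mul_assoc, (SemiconjBy.list_prod_ofFn hXψ).eq, ← mul_assoc,
    List.prod_ofFn_mul_prod_ofFn fun i j => Commute.cis (hcomm i j) _ _]
  simp only [cis_mul_cis (hinv _), hψ,
    List.prod_ofFn_ite_smul_one_add_smul_of_commute P hcomm, Finset.sum_mul, smul_mul_assoc]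

/-- **Pauli-path expansion of the propagated observable.**
Under the commuting-circuit propagation hypotheses, with `S` the set of indices
of generators anticommuting with `X`, the Heisenberg-propagated observable expands
as `∑_{r ∈ {0,1}^S} α(r) (Π_{j∈S} P_j^{r_j}) X`, with
`α(r) = Π_{j∈S} (i sin θ_j)^{r_j} (cos θ_j)^{1−r_j}` (flip-vectors `r` are
identified with the subsets `T ⊆ S` of flipped indices). -/
theorem commuting_circuit_pauli_path_expansion
    (d g : ℕ) (hd : 1 ≤ d) (hg : 1 ≤ g)
    (P : Fin g → Matrix (Fin d) (Fin d) ℂ)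
    (hcomm : ∀ j l, P j * P l = P l * P j)
    (hinv : ∀ j, P j * P j = 1)
    (X : Matrix (Fin d) (Fin d) ℂ)
    (hcx : ∀ j, P j * X = X * P j ∨ P j * X = -(X * P j))
    (θ : Fin g → ℝ)
    (S : Finset (Fin g))
    (hS : S = Finset.univ.filter (fun j => P j * X = -(X * P j))) :
    (List.ofFn fun j => exp (((θ j / 2 : ℂ) * Complex.I) • P j)).prod * X *
        (List.ofFn fun j => exp ((-(θ j / 2 : ℂ) * Complex.I) • P j)).prod =
      ∑ T ∈ S.powerset,
        ((∏ j ∈ T, (Complex.I * (Real.sin (θ j) : ℂ))) *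
            ∏ j ∈ S \ T, (Real.cos (θ j) : ℂ)) •
          ((List.ofFn fun j =>
              if j ∈ T then P j else (1 : Matrix (Fin d) (Fin d) ℂ)).prod * X) :=
  commuting_circuit_pauli_path_expansion_general d g P hcomm hinv X hcx θ S hS
end

section
/- Fix natural numbers n ≥ k ≥ 0. For real χ, define η_ℓ(χ) := 2(χ² − 1)/(4χ² − 1) and η_χ(χ) := 3χ/(4χ² − 1), and the 2×2 matrices T_F(χ) := [[η_ℓ, 0], [η_χ, 1]] and T_𝟙(χ) := [[1, η_χ], [0, η_ℓ]]. Then, as χ → ∞, the scalar (1 1) · T_F(χ)^k · T_𝟙(χ)^{n−k} · (1 1)ᵀ converges to 2^{−k} + 2^{k−n}. -/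
/-!
After the substitution `u = χ⁻¹` both `η_ℓ = 2(1 - u²)/(4 - u²)` and `η_χ = 3u/(4 - u²)` are
continuous at `u = 0`, with values `1/2` and `0`. The scalar is a polynomial in `(η_ℓ, η_χ)`, so
its limit is its value at `(1/2, 0)`, where both transfer matrices are diagonal and the scalar is
`(1/2)^k + (1/2)^(n-k)`.
-/

open Matrix Filter

section TransferMatrices

variable {R : Type*} [CommRing R]

/-- `(1 1) · T_F(a, b)^k · T_𝟙(a, b)^m · (1 1)ᵀ`, with `a = η_ℓ` and `b = η_χ`. -/
def transferWeight (k m : ℕ) (a b : R) : R :=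
  ![1, 1] ⬝ᵥ ((!![a, 0; b, 1] ^ k * !![1, b; 0, a] ^ m) *ᵥ ![1, 1])

theorem transferWeight_zero_right (k m : ℕ) (a : R) :
    transferWeight k m a 0 = a ^ k + a ^ m := by
  rw [transferWeight, ← diagonal_vec2, ← diagonal_vec2, diagonal_pow, diagonal_pow,
    diagonal_mul_diagonal]
  simp [dotProduct, Fin.sum_univ_two]

theorem continuous_transferWeight [TopologicalSpace R] [IsTopologicalRing R] (k m : ℕ) :
    Continuous fun p : R × R => transferWeight k m p.1 p.2 := by
  have hF : Continuous fun p : R × R => !![p.1, 0; p.2, 1] :=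
    continuous_matrix fun i j => by fin_cases i <;> fin_cases j <;> simp <;> fun_prop
  have hI : Continuous fun p : R × R => !![1, p.2; 0, p.1] :=
    continuous_matrix fun i j => by fin_cases i <;> fin_cases j <;> simp <;> fun_prop
  exact continuous_const.dotProduct
    (((hF.pow k).matrix_mul (hI.pow m)).matrix_mulVec continuous_const)

end TransferMatrices

theorem tendsto_atTop_of_eq_comp_inv {𝕜 α : Type*} [Semifield 𝕜] [LinearOrder 𝕜]
    [IsStrictOrderedRing 𝕜] [TopologicalSpace 𝕜] [OrderTopology 𝕜] [TopologicalSpace α]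
    {f g : 𝕜 → α} (hg : ContinuousAt g 0) (hfg : ∀ x ≠ 0, f x = g x⁻¹) :
    Tendsto f atTop (nhds (g 0)) := by
  refine (hg.tendsto.comp tendsto_inv_atTop_zero).congr' ?_
  filter_upwards [eventually_ne_atTop 0] with x hx
  exact (hfg x hx).symm

theorem tendsto_etaEll_atTop :
    Tendsto (fun χ : ℝ => 2 * (χ ^ 2 - 1) / (4 * χ ^ 2 - 1)) atTop (nhds (1 / 2)) := by
  have hg : ContinuousAt (fun u : ℝ => 2 * (1 - u ^ 2) / (4 - u ^ 2)) 0 :=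
    ContinuousAt.div (by fun_prop) (by fun_prop) (by norm_num)
  convert tendsto_atTop_of_eq_comp_inv hg fun χ hχ => ?_ using 2
  · norm_num
  · field_simp

theorem tendsto_etaChi_atTop :
    Tendsto (fun χ : ℝ => 3 * χ / (4 * χ ^ 2 - 1)) atTop (nhds 0) := by
  have hg : ContinuousAt (fun u : ℝ => 3 * u / (4 - u ^ 2)) 0 :=
    ContinuousAt.div (by fun_prop) (by fun_prop) (by norm_num)
  convert tendsto_atTop_of_eq_comp_inv hg fun χ hχ => ?_ using 2
  · norm_num
  · field_simp

/-- **Infinite-bond-dimension limit of the maximal Rényi-2 entropy of an RMPS.**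
With `η_ℓ(χ) = 2(χ²−1)/(4χ²−1)`, `η_χ(χ) = 3χ/(4χ²−1)`,
`T_F = [[η_ℓ,0],[η_χ,1]]` and `T_𝟙 = [[1,η_χ],[0,η_ℓ]]`, the sum of all entries
of `T_F^k · T_𝟙^{n−k}` tends to `2^{−k} + 2^{k−n}` as `χ → ∞`. -/
theorem rmps_renyi2_entropy_limit (n k : ℕ) (hk : k ≤ n) :
    Tendsto (fun χ : ℝ =>
        ![1, 1] ⬝ᵥ
          ((!![2 * (χ ^ 2 - 1) / (4 * χ ^ 2 - 1), 0;
               3 * χ / (4 * χ ^ 2 - 1), 1] ^ k *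
            !![1, 3 * χ / (4 * χ ^ 2 - 1);
               0, 2 * (χ ^ 2 - 1) / (4 * χ ^ 2 - 1)] ^ (n - k)).mulVec ![1, 1]))
      atTop
      (nhds ((2 : ℝ) ^ (-(k : ℤ)) + (2 : ℝ) ^ ((k : ℤ) - (n : ℤ)))) := by
  have hvalue : (2 : ℝ) ^ (-(k : ℤ)) + (2 : ℝ) ^ ((k : ℤ) - (n : ℤ)) =
      (1 / 2 : ℝ) ^ k + (1 / 2 : ℝ) ^ (n - k) := by
    rw [one_div, inv_pow, inv_pow, ← zpow_natCast, ← zpow_natCast, ← _root_.zpow_neg,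
      ← _root_.zpow_neg, Nat.cast_sub hk, neg_sub]
  rw [hvalue, ← transferWeight_zero_right]
  have hη := tendsto_etaEll_atTop.prodMk_nhds tendsto_etaChi_atTop
  exact ((continuous_transferWeight k (n - k)).tendsto _).comp hη |>.congr fun χ => rfl
end

section
/- Fix natural numbers n ≥ m ≥ 0. For real χ, define ζ(χ) := (2χ² − 1)/(2(4χ² − 1)), μ(χ) := χ/(2(4χ² − 1)), η_ℓ(χ) := 2(χ² − 1)/(4χ² − 1), η_χ(χ) := 3χ/(4χ² − 1), and the 2×2 matrices T_O(χ) := [[ζ, μ], [μ, ζ]] and T_𝟙(χ) := [[1, η_χ], [0, η_ℓ]]. Then, as χ → ∞, the scalar (1 1) · T_O(χ)^m · T_𝟙(χ)^{n−m} · (1 1)ᵀ converges to 2^{−2m} · (1 + 2^{m−n}). -/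
/-!
As `χ → ∞` the entries of the transfer matrices converge, `ζ → 1/4`, `μ → 0`, `η_χ → 0` and
`η_ℓ → 1/2`, each being a ratio of polynomials of degree at most two in `χ`. Hence
`T_O → 1/4 · 1` and `T_𝟙 → diag(1, 1/2)`, and since the sum of the entries of `T_O^m T_𝟙^k` is a
continuous function of the two matrices, the limit is the entry sum of `diag(4^{-m}, 4^{-m} 2^{-k})`
with `k = n - m`.
-/

open Matrix Filter Topology

theorem tendsto_quadratic_div_quadratic_atTop (a b c d e f : ℝ) (hd : d ≠ 0) :
    Tendsto (fun x : ℝ => (a * x ^ 2 + b * x + c) / (d * x ^ 2 + e * x + f)) atTop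
      (𝓝 (a / d)) := by
  -- divide numerator and denominator by `x ^ 2` and let `t = x⁻¹` tend to `0`
  have hcont : ContinuousAt (fun t : ℝ => (a + b * t + c * t ^ 2) / (d + e * t + f * t ^ 2)) 0 :=
    ContinuousAt.div (by fun_prop) (by fun_prop) (by simpa)
  have hlim := hcont.tendsto.comp tendsto_inv_atTop_zero
  simp only [mul_zero, add_zero, ne_eq, OfNat.ofNat_ne_zero, not_false_eq_true,
    zero_pow] at hlim
  refine hlim.congr' ?_
  filter_upwards [eventually_ne_atTop 0] with x hx
  rw [Function.comp_apply, ← mul_div_mul_left _ _ (pow_ne_zero 2 hx)]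
  congr 1 <;> field_simp

theorem tendsto_matrix_fin_two {α R : Type*} [TopologicalSpace R] {l : Filter α}
    {a b c d : α → R} {a₀ b₀ c₀ d₀ : R} (ha : Tendsto a l (𝓝 a₀)) (hb : Tendsto b l (𝓝 b₀))
    (hc : Tendsto c l (𝓝 c₀)) (hd : Tendsto d l (𝓝 d₀)) :
    Tendsto (fun x => !![a x, b x; c x, d x]) l (𝓝 !![a₀, b₀; c₀, d₀]) :=
  tendsto_pi_nhds.2 fun i => tendsto_pi_nhds.2 fun j => by
    fin_cases i <;> fin_cases j <;> assumption

theorem ones_dotProduct_scalar_pow_mul_diag_pow_mulVec_ones {R : Type*} [CommSemiring R]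
    (a d : R) (m k : ℕ) :
    ![1, 1] ⬝ᵥ ((!![a, 0; 0, a] ^ m * !![1, 0; 0, d] ^ k) *ᵥ ![1, 1]) = a ^ m * (1 + d ^ k) := by
  simp only [← diagonal_vec2, diagonal_pow, diagonal_mul_diagonal]
  simp [dotProduct, Fin.sum_univ_two]
  ring

/-- **Infinite-bond-dimension limit of the maximal variance of an RMPS marginal.**
With `ζ(χ) = (2χ²−1)/(2(4χ²−1))`, `μ(χ) = χ/(2(4χ²−1))`,
`η_ℓ(χ) = 2(χ²−1)/(4χ²−1)`, `η_χ(χ) = 3χ/(4χ²−1)`,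
`T_O = [[ζ,μ],[μ,ζ]]` and `T_𝟙 = [[1,η_χ],[0,η_ℓ]]`, the sum of all entries of
`T_O^m · T_𝟙^{n−m}` tends to `2^{−2m} (1 + 2^{m−n})` as `χ → ∞`. -/
theorem rmps_marginal_variance_limit (n m : ℕ) (hm : m ≤ n) :
    Tendsto (fun χ : ℝ =>
        ![1, 1] ⬝ᵥ
          ((!![(2 * χ ^ 2 - 1) / (2 * (4 * χ ^ 2 - 1)),
               χ / (2 * (4 * χ ^ 2 - 1));
               χ / (2 * (4 * χ ^ 2 - 1)),
               (2 * χ ^ 2 - 1) / (2 * (4 * χ ^ 2 - 1))] ^ m *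
            !![1, 3 * χ / (4 * χ ^ 2 - 1);
               0, 2 * (χ ^ 2 - 1) / (4 * χ ^ 2 - 1)] ^ (n - m)).mulVec ![1, 1]))
      atTop
      (nhds ((2 : ℝ) ^ (-(2 * m : ℤ)) * (1 + (2 : ℝ) ^ ((m : ℤ) - (n : ℤ))))) := by
  have hζ : Tendsto (fun χ : ℝ => (2 * χ ^ 2 - 1) / (2 * (4 * χ ^ 2 - 1))) atTop (𝓝 (1 / 4)) := by
    convert tendsto_quadratic_div_quadratic_atTop 2 0 (-1) 8 0 (-2) (by norm_num) using 2 <;>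
      ring
  have hμ : Tendsto (fun χ : ℝ => χ / (2 * (4 * χ ^ 2 - 1))) atTop (𝓝 0) := by
    convert tendsto_quadratic_div_quadratic_atTop 0 1 0 8 0 (-2) (by norm_num) using 2 <;>
      ring
  have hηχ : Tendsto (fun χ : ℝ => 3 * χ / (4 * χ ^ 2 - 1)) atTop (𝓝 0) := by
    convert tendsto_quadratic_div_quadratic_atTop 0 3 0 4 0 (-1) (by norm_num) using 2 <;>
      ring
  have hηℓ : Tendsto (fun χ : ℝ => 2 * (χ ^ 2 - 1) / (4 * χ ^ 2 - 1)) atTop (𝓝 (1 / 2)) := by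
    convert tendsto_quadratic_div_quadratic_atTop 2 0 (-2) 4 0 (-1) (by norm_num) using 2 <;>
      ring
  have hsum : Continuous fun M : Matrix (Fin 2) (Fin 2) ℝ => ![1, 1] ⬝ᵥ M *ᵥ ![1, 1] :=
    continuous_const.dotProduct (continuous_id.matrix_mulVec continuous_const)
  have hlim := (hsum.tendsto _).comp
    (((tendsto_matrix_fin_two hζ hμ hμ hζ).pow m).mul
      ((tendsto_matrix_fin_two (tendsto_const_nhds (x := 1)) hηχ
        (tendsto_const_nhds (x := 0)) hηℓ).pow (n - m)))
  rw [ones_dotProduct_scalar_pow_mul_diag_pow_mulVec_ones] at hlim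
  have hquarter : (2 : ℝ) ^ (-(2 * m : ℤ)) = (1 / 4) ^ m := by
    rw [_root_.zpow_neg, _root_.zpow_mul, zpow_natCast, one_div, inv_pow]
    norm_num
  have hhalf : (2 : ℝ) ^ ((m : ℤ) - (n : ℤ)) = (1 / 2) ^ (n - m) := by
    rw [← neg_sub, ← Nat.cast_sub hm, _root_.zpow_neg, zpow_natCast, one_div, inv_pow]
  rwa [hquarter, hhalf]
end
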